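/- Let Π be a ground logic program over atoms A with rules indexed by a finite type R, and let T(Π) be its transformed program over A ⊎ R. The map sending M ⊆ A to M' = M ∪ { dm_r : r ∈ R, the body of rule r is false in M } is a bijection from the set of supported models of Π onto the set of stable models of T(Π), with inverse given by M' ↦ M' ∩ A. -/

import Mathlib

/-- A ground rule: head ← body⁺, not body⁻. -/
structure Rule (A : Type*) where
  head : A
  bodyPos : Finset A
  bodyNeg : Finset A
deriving DecidableEq

/-- The body of rule `r` is true in interpretation `M`:
`body⁺(r) ⊆ M` and `body⁻(r) ∩ M = ∅`. -/
def BodyTrue {A : Type*} (M : Set A) (r : Rule A) : Prop :=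
  ↑r.bodyPos ⊆ M ∧ ∀ a ∈ r.bodyNeg, a ∉ M

/-- `M` is a model of the program `P` (a family of rules indexed by `R`). -/
def IsModel {A R : Type*} (P : R → Rule A) (M : Set A) : Prop :=
  ∀ r, BodyTrue M (P r) → (P r).head ∈ M

/-- `M` is a supported model of `P`: a model in which every true atom
is the head of some rule of `P` whose body is true in `M`. -/
def IsSupported {A R : Type*} (P : R → Rule A) (M : Set A) : Prop :=
  IsModel P M ∧ ∀ a ∈ M, ∃ r, (P r).head = a ∧ ↑(P r).bodyPos ⊆ M ∧
    ∀ b ∈ (P r).bodyNeg, b ∉ M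

/-- `N` is a model of the Gelfond–Lifschitz reduct `P^M`: for every rule of `P`
surviving the reduct (i.e. with `body⁻(r) ∩ M = ∅`), whose negative literals are
removed, if its positive body holds in `N` then so does its head. -/
def ReductModel {A R : Type*} (P : R → Rule A) (M N : Set A) : Prop :=
  ∀ r, (∀ a ∈ (P r).bodyNeg, a ∉ M) → ↑(P r).bodyPos ⊆ N → (P r).head ∈ N

/-- `M` is a stable model of `P`: `M` is the least model of the reduct `P^M`. -/
def IsStable {A R : Type*} (P : R → Rule A) (M : Set A) : Prop :=
  ReductModel P M M ∧ ∀ N, ReductModel P M N → M ⊆ N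

/-- Index type for the rules of the transformed program `T(P)`: one rule
`head(r) ← not dm_r` per rule `r`, one rule `dm_r ← not l` per `l ∈ body⁺(r)`,
and one rule `dm_r ← l` per `l ∈ body⁻(r)`. -/
abbrev TransIdx {A R : Type*} (P : R → Rule A) : Type _ :=
  R ⊕ ((Σ r : R, {l // l ∈ (P r).bodyPos}) ⊕ (Σ r : R, {l // l ∈ (P r).bodyNeg}))

/-- The transformed program `T(P)` over atoms `A ⊕ R`, where `Sum.inr r`
plays the role of the fresh auxiliary atom `dm_r`. -/
def Transform {A R : Type*} (P : R → Rule A) : TransIdx P → Rule (A ⊕ R)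
  | Sum.inl r => ⟨Sum.inl (P r).head, ∅, {Sum.inr r}⟩
  | Sum.inr (Sum.inl ⟨r, l⟩) => ⟨Sum.inr r, ∅, {Sum.inl l.1}⟩
  | Sum.inr (Sum.inr ⟨r, l⟩) => ⟨Sum.inr r, {Sum.inl l.1}, ∅⟩

/-- `Lift P M = M ∪ { dm_r | the body of rule r is false in M }`,
viewing `M ⊆ A` as a subset of `A ⊕ R` via the left injection. -/
def Lift {A R : Type*} (P : R → Rule A) (M : Set A) : Set (A ⊕ R) :=
  Sum.inl '' M ∪ Sum.inr '' {r | ¬ BodyTrue M (P r)}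

/-!
Stable models are always supported. In a supported model `M'` of `T(Π)` the atom `dm_r` holds
exactly when the body of `r` fails in the `A`-part `M' ∩ A`, so `M'` is the lift of its
`A`-part, and that `A`-part is a supported model of `Π`. Conversely, the lift of a supported
model `M` of `Π` is stable because `T(Π)` has no positive loops: a model `N` of the reduct
contains every `a ∈ M`, as the supporting rule `r` of `a` has `dm_r` false and so leaves the
fact `a` in the reduct, and then it contains every `dm_r` of the lift, whose bodies only
mention atoms of `A`.
-/

lemma not_bodyTrue_iff {A : Type*} {M : Set A} {r : Rule A} :
    ¬ BodyTrue M r ↔ (∃ l ∈ r.bodyPos, l ∉ M) ∨ ∃ l ∈ r.bodyNeg, l ∈ M := by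
  simp only [BodyTrue, not_and_or, Set.not_subset, Finset.mem_coe, not_forall, not_not,
    exists_prop]

section Stable

variable {A R : Type*} {P : R → Rule A} {M : Set A}

lemma reductModel_self_iff : ReductModel P M M ↔ IsModel P M :=
  forall_congr' fun _ => ⟨fun h hb => h hb.2 hb.1, fun h hneg hpos => h ⟨hpos, hneg⟩⟩

/-- Removing `x` from a stable model must break the reduct, which yields a rule deriving `x`
from the rest of the model. -/
lemma IsStable.exists_rule_of_mem (hM : IsStable P M) {x : A} (hx : x ∈ M) :
    ∃ r, (P r).head = x ∧ (∀ a ∈ (P r).bodyNeg, a ∉ M) ∧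
      ↑(P r).bodyPos ⊆ M \ {x} := by
  by_contra! hnone
  have hreduct : ReductModel P M (M \ {x}) := fun r hneg hpos =>
    ⟨hM.1 r hneg (hpos.trans Set.sdiff_subset), fun hhead => hnone r hhead hneg hpos⟩
  exact (hM.2 _ hreduct hx).2 rfl

lemma IsStable.isSupported (hM : IsStable P M) : IsSupported P M := by
  refine ⟨reductModel_self_iff.1 hM.1, fun a ha => ?_⟩
  obtain ⟨r, hhead, hneg, hpos⟩ := hM.exists_rule_of_mem ha
  exact ⟨r, hhead, hpos.trans Set.sdiff_subset, hneg⟩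

end Stable

section Transform

variable {A R : Type*} {P : R → Rule A}

@[simp]
lemma mem_lift_inl {M : Set A} {a : A} : (Sum.inl a : A ⊕ R) ∈ Lift P M ↔ a ∈ M := by
  simp [Lift]

@[simp]
lemma mem_lift_inr {M : Set A} {r : R} :
    (Sum.inr r : A ⊕ R) ∈ Lift P M ↔ ¬ BodyTrue M (P r) := by
  simp [Lift]

lemma preimage_inl_lift (M : Set A) : Sum.inl ⁻¹' Lift P M = M := by
  ext a
  exact mem_lift_inl

lemma reductModel_transform_iff {M' N : Set (A ⊕ R)} :
    ReductModel (Transform P) M' N ↔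
      (∀ r, Sum.inr r ∉ M' → Sum.inl (P r).head ∈ N) ∧
      (∀ r, ∀ l ∈ (P r).bodyPos, Sum.inl l ∉ M' → Sum.inr r ∈ N) ∧
      (∀ r, ∀ l ∈ (P r).bodyNeg, Sum.inl l ∈ N → Sum.inr r ∈ N) := by
  constructor
  · intro h
    refine ⟨fun r hr => ?_, fun r l hl hlM => ?_, fun r l hl hlN => ?_⟩
    · simpa [Transform] using h (.inl r) (by simpa [Transform]) (by simp [Transform])
    · simpa [Transform] using
        h (.inr (.inl ⟨r, l, hl⟩)) (by simpa [Transform]) (by simp [Transform])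
    · simpa [Transform] using
        h (.inr (.inr ⟨r, l, hl⟩)) (by simp [Transform]) (by simpa [Transform])
  · rintro ⟨hhead, hpos, hneg⟩ (r | ⟨r, l, hl⟩ | ⟨r, l, hl⟩) hnegM hposN <;>
      simp only [Transform, Finset.mem_singleton, forall_eq, Finset.coe_singleton,
        Set.singleton_subset_iff] at hnegM hposN ⊢
    · exact hhead r hnegM
    · exact hpos r l hl hnegM
    · exact hneg r l hl hposN

lemma IsModel.inr_mem_of_not_bodyTrue {M' : Set (A ⊕ R)} (h : IsModel (Transform P) M') {r : R}
    (hr : ¬ BodyTrue (Sum.inl ⁻¹' M') (P r)) : Sum.inr r ∈ M' := by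
  obtain ⟨-, hpos, hneg⟩ := reductModel_transform_iff.1 (reductModel_self_iff.2 h)
  rcases not_bodyTrue_iff.1 hr with ⟨l, hl, hlM⟩ | ⟨l, hl, hlM⟩
  · exact hpos r l hl hlM
  · exact hneg r l hl hlM

lemma IsSupported.inr_mem_transform_iff {M' : Set (A ⊕ R)} (h : IsSupported (Transform P) M')
    (r : R) : Sum.inr r ∈ M' ↔ ¬ BodyTrue (Sum.inl ⁻¹' M') (P r) := by
  refine ⟨fun hr => ?_, h.1.inr_mem_of_not_bodyTrue⟩
  rw [not_bodyTrue_iff]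
  obtain ⟨t, hhead, hpos, hneg⟩ := h.2 _ hr
  rcases t with r' | ⟨r', l, hl⟩ | ⟨r', l, hl⟩ <;>
    simp only [Transform, reduceCtorEq, Sum.inr.injEq, Finset.mem_singleton, forall_eq,
      Finset.coe_singleton, Set.singleton_subset_iff] at hhead hpos hneg
  · exact .inl ⟨l, hhead ▸ hl, hneg⟩
  · exact .inr ⟨l, hhead ▸ hl, hpos⟩

lemma IsSupported.lift_preimage_inl {M' : Set (A ⊕ R)} (h : IsSupported (Transform P) M') :
    Lift P (Sum.inl ⁻¹' M') = M' := by
  ext (a | r)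
  · exact mem_lift_inl
  · rw [mem_lift_inr, h.inr_mem_transform_iff]

lemma IsSupported.of_transform {M' : Set (A ⊕ R)} (h : IsSupported (Transform P) M') :
    IsSupported P (Sum.inl ⁻¹' M') := by
  have hhead := (reductModel_transform_iff.1 (reductModel_self_iff.2 h.1)).1
  refine ⟨fun r hr => hhead r ((h.inr_mem_transform_iff r).not_left.2 hr), fun a ha => ?_⟩
  obtain ⟨t, ht, -, hneg⟩ := h.2 _ ha
  rcases t with r | ⟨r, l, hl⟩ | ⟨r, l, hl⟩ <;>
    simp only [Transform, reduceCtorEq, Sum.inl.injEq, Finset.mem_singleton, forall_eq] at ht hneg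
  obtain ⟨hpos, hnegM⟩ := not_not.1 ((h.inr_mem_transform_iff r).not.1 hneg)
  exact ⟨r, ht, hpos, hnegM⟩

lemma IsSupported.isStable_transform_lift {M : Set A} (h : IsSupported P M) :
    IsStable (Transform P) (Lift P M) := by
  refine ⟨reductModel_transform_iff.2
    ⟨fun r hr => ?_, fun r l hl hlM => ?_, fun r l hl hlM => ?_⟩, fun N hN => ?_⟩
  · exact mem_lift_inl.2 (h.1 r (by simpa using hr))
  · exact mem_lift_inr.2 fun hb => (mem_lift_inl.not.1 hlM) (hb.1 hl)
  · exact mem_lift_inr.2 fun hb => hb.2 l hl (mem_lift_inl.1 hlM)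
  obtain ⟨hhead, hpos, hneg⟩ := reductModel_transform_iff.1 hN
  have hM : ∀ a ∈ M, (Sum.inl a : A ⊕ R) ∈ N := fun a ha => by
    obtain ⟨r, rfl, hbody⟩ := h.2 a ha
    exact hhead r (mem_lift_inr.not.2 (not_not.2 hbody))
  rintro (a | r) hx
  · exact hM a (mem_lift_inl.1 hx)
  · rcases not_bodyTrue_iff.1 (mem_lift_inr.1 hx) with ⟨l, hl, hlM⟩ | ⟨l, hl, hlM⟩
    · exact hpos r l hl (mem_lift_inl.not.2 hlM)
    · exact hneg r l hl (hM l hlM)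

end Transform

theorem lift_bijection_supported_stable_general
    {A R : Type*} (P : R → Rule A) :
    Set.BijOn (Lift P) {M | IsSupported P M} {M' | IsStable (Transform P) M'} ∧
      Set.InvOn (fun M' : Set (A ⊕ R) => Sum.inl ⁻¹' M') (Lift P)
        {M | IsSupported P M} {M' | IsStable (Transform P) M'} := by
  have hinv : Set.InvOn (fun M' : Set (A ⊕ R) => Sum.inl ⁻¹' M') (Lift P)
      {M | IsSupported P M} {M' | IsStable (Transform P) M'} :=
    ⟨fun M _ => preimage_inl_lift M, fun _ hM' => hM'.isSupported.lift_preimage_inl⟩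
  exact ⟨hinv.bijOn (fun _ hM => hM.isStable_transform_lift)
    (fun _ hM' => hM'.isSupported.of_transform), hinv⟩

/-- The map `M ↦ M ∪ { dm_r | body of r is false in M }` is a bijection from
the supported models of `P` onto the stable models of `T(P)`, with inverse
`M' ↦ M' ∩ A`. -/
theorem lift_bijection_supported_stable
    {A R : Type*} [Fintype R] (P : R → Rule A) :
    Set.BijOn (Lift P) {M | IsSupported P M} {M' | IsStable (Transform P) M'} ∧
      Set.InvOn (fun M' : Set (A ⊕ R) => Sum.inl ⁻¹' M') (Lift P)
        {M | IsSupported P M} {M' | IsStable (Transform P) M'} :=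
  lift_bijection_supported_stable_general P
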